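/- arXiv:math/0611603 — 5 statements merged into one kernel-verified Lean document; each statement's English description precedes it below -/
import Mathlib

section
/- If a class 𝔽 of left R-modules is closed under direct summands and is precovering, then 𝔽 is closed under set-indexed direct sums. -/
universe u

open TensorProduct CategoryTheory DirectSum

noncomputable section

def IsPrecovering (R : Type u) [Ring R] (𝓕 : Set (ModuleCat.{u} R)) : Prop :=
  ∀ M : ModuleCat.{u} R, ∃ F ∈ 𝓕, ∃ p : F ⟶ M,
    ∀ F' ∈ 𝓕, ∀ q : F' ⟶ M, ∃ h : F' ⟶ F, h ≫ p = q

def ClosedUnderSummands (R : Type u) [Ring R] (𝓕 : Set (ModuleCat.{u} R)) : Prop :=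
  ∀ (F A : ModuleCat.{u} R), F ∈ 𝓕 →
    (∃ (i : A ⟶ F) (p : F ⟶ A), i ≫ p = 𝟙 A) → A ∈ 𝓕

/-
The 𝓕-precover `p : F → ⨁ i, M i` receives every coprojection `M i → ⨁ i, M i`, since `M i ∈ 𝓕`.
The lifts `M i → F` assemble into a map `⨁ i, M i → F` which is a section of `p`, so the direct
sum is a summand of `F ∈ 𝓕`.
-/

theorem DirectSum.comp_toModule_eq_id {R ι N : Type*} [Semiring R] [DecidableEq ι]
    {M : ι → Type*} [∀ i, AddCommMonoid (M i)] [∀ i, Module R (M i)]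
    [AddCommMonoid N] [Module R N] {p : N →ₗ[R] ⨁ i, M i} {s : ∀ i, M i →ₗ[R] N}
    (hs : ∀ i, p ∘ₗ s i = lof R ι M i) :
    p ∘ₗ toModule R ι N s = LinearMap.id := by
  refine linearMap_ext R fun i => LinearMap.ext fun x => ?_
  simpa only [LinearMap.comp_apply, toModule_lof, LinearMap.id_apply]
    using LinearMap.congr_fun (hs i) x

theorem ClosedUnderSummands.directSum_mem {R : Type u} [Ring R] {𝓕 : Set (ModuleCat.{u} R)}
    (hsummand : ClosedUnderSummands R 𝓕) {ι : Type u} [DecidableEq ι] {M : ι → ModuleCat.{u} R}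
    {F : ModuleCat.{u} R} (hF : F ∈ 𝓕) (p : F ⟶ ModuleCat.of R (⨁ i, ↥(M i)))
    (hp : ∀ i, ∃ s : M i ⟶ F, s ≫ p = ModuleCat.ofHom (lof R ι (fun i => ↥(M i)) i)) :
    ModuleCat.of R (⨁ i, ↥(M i)) ∈ 𝓕 := by
  choose s hs using hp
  refine hsummand F _ hF ⟨ModuleCat.ofHom (toModule R ι F fun i => (s i).hom), p, ?_⟩
  ext : 1
  exact comp_toModule_eq_id fun i => congrArg ModuleCat.Hom.hom (hs i)

/-- If a class of left `R`-modules is closed under direct summands and is precovering,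
then it is closed under set-indexed direct sums. -/
theorem stmt0 (R : Type u) [Ring R] (𝓕 : Set (ModuleCat.{u} R))
    (hsummand : ClosedUnderSummands R 𝓕) (hpre : IsPrecovering R 𝓕)
    (ι : Type u) (M : ι → ModuleCat.{u} R) (hM : ∀ i, M i ∈ 𝓕) :
    ModuleCat.of R (⨁ i, ↥(M i)) ∈ 𝓕 := by
  classical
  obtain ⟨F, hF, p, hp⟩ := hpre (ModuleCat.of R (⨁ i, ↥(M i)))
  exact hsummand.directSum_mem hF p fun i => hp (M i) (hM i) _

end
end

section
/- If a class 𝔽 of R-modules is closed under set-indexed direct sums and under pure quotient modules, then 𝔽 is closed under colimits indexed by partially ordered (directed) sets. In particular, for any directed system {F_i} in 𝔽, the colimit colim F_i lies in 𝔽. -/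
universe u

open TensorProduct CategoryTheory DirectSum

noncomputable section

/-- The submodule of relations presenting the tensor product `Q ⊗_R M` as a quotient of
`Q ⊗_ℤ M`, for a right `R`-module `Q` and a left `R`-module `M`. -/
def tensorRelations (R : Type u) [Ring R] (Q : Type u) [AddCommGroup Q] [Module Rᵐᵒᵖ Q]
    (M : Type u) [AddCommGroup M] [Module R M] : Submodule ℤ (TensorProduct ℤ Q M) :=
  Submodule.span ℤ
    {x | ∃ (q : Q) (r : R) (m : M), x = (MulOpposite.op r • q) ⊗ₜ[ℤ] m - q ⊗ₜ[ℤ] (r • m)}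

/-- The map `Q ⊗_R M → Q ⊗_R N` induced by `f` is injective, where `Q ⊗_R -` is realized
as the quotient of `Q ⊗_ℤ -` by `tensorRelations`. -/
def StaysInjective (R : Type u) [Ring R] (Q : Type u) [AddCommGroup Q] [Module Rᵐᵒᵖ Q]
    {M N : Type u} [AddCommGroup M] [Module R M] [AddCommGroup N] [Module R N]
    (f : M →ₗ[R] N) : Prop :=
  ∀ z : TensorProduct ℤ Q M,
    LinearMap.lTensor Q f.toAddMonoidHom.toIntLinearMap z ∈ tensorRelations R Q N →
      z ∈ tensorRelations R Q M

/-- `f` is a pure monomorphism of left `R`-modules: it is injective and stays injective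
after tensoring with every right `R`-module. -/
def IsPureMono (R : Type u) [Ring R] {M N : Type u} [AddCommGroup M] [Module R M]
    [AddCommGroup N] [Module R N] (f : M →ₗ[R] N) : Prop :=
  Function.Injective f ∧
    ∀ (Q : Type u) [AddCommGroup Q] [Module Rᵐᵒᵖ Q], StaysInjective R Q f

/-- `N` is a pure submodule of `M`. -/
def IsPureSubmodule (R : Type u) [Ring R] {M : Type u} [AddCommGroup M] [Module R M]
    (N : Submodule R M) : Prop :=
  IsPureMono R N.subtype

/-- `0 → M' → M → M'' → 0` is a pure exact sequence of left `R`-modules. -/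
def IsPureExactSeq (R : Type u) [Ring R] {M' M M'' : Type u}
    [AddCommGroup M'] [Module R M'] [AddCommGroup M] [Module R M]
    [AddCommGroup M''] [Module R M'']
    (f : M' →ₗ[R] M) (g : M →ₗ[R] M'') : Prop :=
  Function.Surjective g ∧ Function.Exact f g ∧ IsPureMono R f

/-- A class of left `R`-modules is closed under set-indexed direct sums. -/
def ClosedUnderDirectSums (R : Type u) [Ring R] (𝓕 : Set (ModuleCat.{u} R)) : Prop :=
  ∀ (ι : Type u) (M : ι → ModuleCat.{u} R), (∀ i, M i ∈ 𝓕) →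
    ModuleCat.of R (⨁ i, ↥(M i)) ∈ 𝓕

/-- A class of left `R`-modules is closed under pure quotient modules. -/
def ClosedUnderPureQuotients (R : Type u) [Ring R] (𝓕 : Set (ModuleCat.{u} R)) : Prop :=
  ∀ (M N : ModuleCat.{u} R) (g : M ⟶ N), Function.Surjective g →
    IsPureSubmodule R (LinearMap.ker (g.hom : M →ₗ[R] N)) → M ∈ 𝓕 → N ∈ 𝓕

/-!
The canonical surjection `⨁ i, G i → colim G` has a locally split kernel `K`. For `k` in the
index set, sending `a ∈ G i` with `i ≤ k` to `a - f i k a` (and discarding the components with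
`i ≰ k`) is a map `⨁ i, G i → K`; it fixes an element of `K` as soon as `k` bounds its support
and is large enough that the element, pushed forward to `G k`, vanishes there, which happens for
all large `k` because the element maps to `0` in the colimit. By directedness one `k` works for
any finite subset of `K`. A locally split monomorphism is pure: a tensor `∑ q ⊗ x` involves
only finitely many `x`, and a retraction fixing them carries the relations defining `Q ⊗_R -`
back to relations.
-/

open Filter

def IsLocallySplitMono {R M N : Type*} [Ring R] [AddCommGroup M] [Module R M]
    [AddCommGroup N] [Module R N] (f : M →ₗ[R] N) : Prop :=
  ∀ s : Finset M, ∃ ρ : N →ₗ[R] M, ∀ x ∈ s, ρ (f x) = x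

section Purity

variable {R : Type u} [Ring R] {M N : Type u} [AddCommGroup M] [Module R M]
  [AddCommGroup N] [Module R N]

theorem lTensor_mem_tensorRelations (Q : Type u) [AddCommGroup Q] [Module Rᵐᵒᵖ Q]
    (g : M →ₗ[R] N) {z : Q ⊗[ℤ] M} (hz : z ∈ tensorRelations R Q M) :
    LinearMap.lTensor Q g.toAddMonoidHom.toIntLinearMap z ∈ tensorRelations R Q N := by
  induction hz using Submodule.span_induction with
  | mem _ h =>
    obtain ⟨q, r, m, rfl⟩ := h
    exact Submodule.subset_span ⟨q, r, g m, by simp⟩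
  | zero => simp
  | add _ _ _ _ hx hy => simpa using add_mem hx hy
  | smul n _ _ hx => simpa using Submodule.smul_mem _ n hx

theorem IsLocallySplitMono.isPureMono {f : M →ₗ[R] N} (hf : IsLocallySplitMono f) :
    IsPureMono R f := by
  classical
  refine ⟨fun x y hxy => ?_, fun Q _ _ z hz => ?_⟩
  · obtain ⟨ρ, hρ⟩ := hf {x, y}
    rw [← hρ x (by simp), ← hρ y (by simp), hxy]
  obtain ⟨s, rfl⟩ := TensorProduct.exists_finset z
  obtain ⟨ρ, hρ⟩ := hf (s.image Prod.snd)
  have hretract : LinearMap.lTensor Q ρ.toAddMonoidHom.toIntLinearMap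
      (LinearMap.lTensor Q f.toAddMonoidHom.toIntLinearMap (∑ p ∈ s, p.1 ⊗ₜ[ℤ] p.2)) =
        ∑ p ∈ s, p.1 ⊗ₜ[ℤ] p.2 := by
    simp only [map_sum, LinearMap.lTensor_tmul]
    exact Finset.sum_congr rfl fun p hp => by
      simp [hρ p.2 (Finset.mem_image_of_mem _ hp)]
  rw [← hretract]
  exact lTensor_mem_tensorRelations Q ρ hz

end Purity

namespace Module.DirectLimit

variable {R : Type*} [Ring R] {ι : Type*} [Preorder ι] [DecidableEq ι] {G : ι → Type*}
  [∀ i, AddCommGroup (G i)] [∀ i, Module R (G i)] (f : ∀ i j, i ≤ j → G i →ₗ[R] G j)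

def ofDirectSum : (⨁ i, G i) →ₗ[R] DirectLimit G f :=
  DirectSum.toModule R ι _ (of R ι G f)

open scoped Classical in
def pushTo (k : ι) : (⨁ i, G i) →ₗ[R] G k :=
  DirectSum.toModule R ι (G k) fun i => if h : i ≤ k then f i k h else 0

open scoped Classical in
def retractAt (k : ι) : (⨁ i, G i) →ₗ[R] ⨁ i, G i :=
  DirectSum.toModule R ι _ fun i =>
    if h : i ≤ k then lof R ι G i - (lof R ι G k).comp (f i k h) else 0

theorem ofDirectSum_surjective [IsDirectedOrder ι] :
    Function.Surjective (ofDirectSum f) := by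
  rcases isEmpty_or_nonempty ι with hι | hι
  · exact fun y => ⟨0, Subsingleton.elim _ _⟩
  · intro y
    obtain ⟨i, x, rfl⟩ := exists_of y
    exact ⟨lof R ι G i x, toModule_lof R i x⟩

theorem retractAt_mem_ker (k : ι) (x : ⨁ i, G i) :
    retractAt f k x ∈ LinearMap.ker (ofDirectSum f) := by
  rw [LinearMap.mem_ker, ← LinearMap.comp_apply]
  suffices (ofDirectSum f).comp (retractAt f k) = 0 by rw [this, LinearMap.zero_apply]
  refine DirectSum.linearMap_ext R fun i => LinearMap.ext fun a => ?_
  by_cases h : i ≤ k <;> simp [ofDirectSum, retractAt, h]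

theorem eventually_retractAt_eq (x : ⨁ i, G i) :
    ∀ᶠ k in atTop, retractAt f k x = x - lof R ι G k (pushTo f k x) := by
  induction x using DirectSum.induction_on with
  | zero => simp
  | of i a =>
    filter_upwards [eventually_ge_atTop i] with k hk
    simp [← lof_eq_of R, retractAt, pushTo, hk]
  | add x y hx hy =>
    filter_upwards [hx, hy] with k hxk hyk
    rw [map_add, map_add, map_add, hxk, hyk]
    abel

theorem eventually_of_pushTo (x : ⨁ i, G i) :
    ∀ᶠ k in atTop, of R ι G f k (pushTo f k x) = ofDirectSum f x := by
  induction x using DirectSum.induction_on with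
  | zero => simp
  | of i a =>
    filter_upwards [eventually_ge_atTop i] with k hk
    simp [← lof_eq_of R, pushTo, ofDirectSum, hk]
  | add x y hx hy =>
    filter_upwards [hx, hy] with k hxk hyk
    rw [map_add, map_add, map_add, hxk, hyk]

variable [DirectedSystem G fun i j h => f i j h]

theorem eventually_pushTo_eq_map (x : ⨁ i, G i) :
    ∀ᶠ j in atTop, ∀ k (h : j ≤ k), pushTo f k x = f j k h (pushTo f j x) := by
  induction x using DirectSum.induction_on with
  | zero => simp
  | of i a =>
    filter_upwards [eventually_ge_atTop i] with j hij k hjk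
    simp [← lof_eq_of R, pushTo, hij, hij.trans hjk, DirectedSystem.map_map]
  | add x y hx hy =>
    filter_upwards [hx, hy] with j hxj hyj k hjk
    rw [map_add, map_add, map_add, hxj k hjk, hyj k hjk]

theorem eventually_pushTo_eq_zero [IsDirectedOrder ι] {x : ⨁ i, G i}
    (hx : ofDirectSum f x = 0) : ∀ᶠ k in atTop, pushTo f k x = 0 := by
  rcases isEmpty_or_nonempty ι with hι | hι
  · exact Eventually.of_forall isEmptyElim
  obtain ⟨j, hmap, hof⟩ := ((eventually_pushTo_eq_map f x).and (eventually_of_pushTo f x)).exists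
  obtain ⟨k, hjk, hzero⟩ := of.zero_exact (hof.trans hx)
  filter_upwards [eventually_ge_atTop k] with l hkl
  rw [hmap l (hjk.trans hkl), ← DirectedSystem.map_map f hjk hkl, hzero, map_zero]

theorem isLocallySplitMono_ker_subtype [IsDirectedOrder ι] :
    IsLocallySplitMono (LinearMap.ker (ofDirectSum f)).subtype := by
  intro s
  rcases isEmpty_or_nonempty ι with hι | hι
  · exact ⟨0, fun x _ => Subsingleton.elim _ _⟩
  have hfix : ∀ᶠ k in atTop, ∀ x ∈ s, retractAt f k x = x := by
    refine (eventually_all_finset s).2 fun x _ => ?_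
    filter_upwards [eventually_retractAt_eq f x, eventually_pushTo_eq_zero f x.2]
      with k hretract hpush
    rw [hretract, hpush, map_zero, sub_zero]
  obtain ⟨k, hk⟩ := hfix.exists
  exact ⟨LinearMap.codRestrict _ (retractAt f k) (retractAt_mem_ker f k),
    fun x hx => Subtype.ext (hk x hx)⟩

end Module.DirectLimit

/-- If a class of left `R`-modules is closed under set-indexed direct sums and under pure
quotient modules, then it is closed under colimits indexed by directed partially ordered
sets: for any directed system `{G i}` in the class, the colimit lies in the class. -/
theorem stmt3 (R : Type u) [Ring R] (𝓕 : Set (ModuleCat.{u} R))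
    (hsum : ClosedUnderDirectSums R 𝓕) (hpq : ClosedUnderPureQuotients R 𝓕)
    (ι : Type u) [PartialOrder ι] [IsDirected ι (· ≤ ·)] [DecidableEq ι]
    (G : ι → Type u) [∀ i, AddCommGroup (G i)] [∀ i, Module R (G i)]
    (f : ∀ i j, i ≤ j → G i →ₗ[R] G j) [DirectedSystem G fun i j h => f i j h]
    (hG : ∀ i, ModuleCat.of R (G i) ∈ 𝓕) :
    ModuleCat.of R (Module.DirectLimit G f) ∈ 𝓕 :=
  hpq (ModuleCat.of R (⨁ i, G i)) _ (ModuleCat.ofHom (Module.DirectLimit.ofDirectSum f))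
    (Module.DirectLimit.ofDirectSum_surjective f)
    (Module.DirectLimit.isLocallySplitMono_ker_subtype f).isPureMono
    (hsum ι (fun i => ModuleCat.of R (G i)) hG)

end
end

section
/- For a directed system {F_i} of R-modules indexed by a directed partially ordered set, the canonical surjection ⊕_i F_i → colim F_i is a pure epimorphism, i.e., its kernel is a pure submodule of ⊕_i F_i. -/
universe u

open TensorProduct CategoryTheory DirectSum

noncomputable section

/-- An `R`-linear map sends `tensorRelations` into `tensorRelations`. -/
theorem tensorRelations_map_mem (R : Type u) [Ring R] (Q : Type u) [AddCommGroup Q]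
    [Module Rᵐᵒᵖ Q] {M N : Type u} [AddCommGroup M] [Module R M] [AddCommGroup N] [Module R N]
    (h : M →ₗ[R] N) {w : TensorProduct ℤ Q M} (hw : w ∈ tensorRelations R Q M) :
    LinearMap.lTensor Q h.toAddMonoidHom.toIntLinearMap w ∈ tensorRelations R Q N := by
  induction hw using Submodule.span_induction with
  | mem x hx =>
    obtain ⟨q, r, m, rfl⟩ := hx
    rw [map_sub, LinearMap.lTensor_tmul, LinearMap.lTensor_tmul]
    refine Submodule.subset_span ⟨q, r, h m, ?_⟩
    have hs : h.toAddMonoidHom.toIntLinearMap (r • m) = r • h m := h.map_smul r m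
    rw [hs]
    rfl
  | zero => rw [map_zero]; exact (tensorRelations R Q N).zero_mem
  | add x y _ _ hx hy => rw [map_add]; exact add_mem hx hy
  | smul c x _ hx => rw [map_smul]; exact Submodule.smul_mem _ c hx

/-- Two linear maps out of a direct sum agree on an element supported below `j₀` provided
they agree on all generators coming from indices `≤ j₀`. -/
theorem eq_on_supported {R : Type u} [Ring R] {ι : Type u} [PartialOrder ι] [DecidableEq ι]
    {G : ι → Type u} [∀ i, AddCommGroup (G i)] [∀ i, Module R (G i)]
    [∀ (i : ι) (x : G i), Decidable (x ≠ 0)]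
    {P : Type u} [AddCommGroup P] [Module R P] (j₀ : ι)
    (A B : (⨁ i, G i) →ₗ[R] P)
    (hAB : ∀ (i : ι), i ≤ j₀ → ∀ x : G i,
      A (DirectSum.lof R ι G i x) = B (DirectSum.lof R ι G i x))
    (k : ⨁ i, G i) (hk : ∀ i ∈ DFinsupp.support k, i ≤ j₀) : A k = B k := by
  rw [← DirectSum.sum_support_of (x := k), map_sum, map_sum]
  exact Finset.sum_congr rfl fun i hi => by
    rw [← DirectSum.lof_eq_of R]; exact hAB i (hk i hi) _

/-- For a directed system `{G i}` of left `R`-modules indexed by a directed partially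
ordered set, the canonical surjection `⊕ᵢ G i → colim G i` is a pure epimorphism: it is
surjective and its kernel is a pure submodule of the direct sum. -/
theorem stmt4 (R : Type u) [Ring R]
    (ι : Type u) [PartialOrder ι] [IsDirected ι (· ≤ ·)] [DecidableEq ι]
    (G : ι → Type u) [∀ i, AddCommGroup (G i)] [∀ i, Module R (G i)]
    (f : ∀ i j, i ≤ j → G i →ₗ[R] G j) [DirectedSystem G fun i j h => f i j h] :
    Function.Surjective
      (DirectSum.toModule R ι (Module.DirectLimit G f)
        fun i => Module.DirectLimit.of R ι G f i) ∧
    IsPureSubmodule R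
      (LinearMap.ker (DirectSum.toModule R ι (Module.DirectLimit G f)
        fun i => Module.DirectLimit.of R ι G f i)) := by
  classical
  set π : (⨁ i, G i) →ₗ[R] Module.DirectLimit G f :=
    DirectSum.toModule R ι (Module.DirectLimit G f)
      (fun i => Module.DirectLimit.of R ι G f i) with hπ
  set K : Submodule R (⨁ i, G i) := LinearMap.ker π with hK
  constructor
  · -- surjectivity
    intro z
    cases isEmpty_or_nonempty ι with
    | inl h => exact ⟨0, Subsingleton.elim _ _⟩
    | inr h =>
      obtain ⟨i, x, hx⟩ := Module.DirectLimit.exists_of z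
      exact ⟨DirectSum.lof R ι G i x, by rwa [hπ, DirectSum.toModule_lof]⟩
  refine ⟨Submodule.injective_subtype _, ?_⟩
  intro Q _ _ z hz
  cases isEmpty_or_nonempty ι with
  | inl h =>
    haveI hsub : Subsingleton (⨁ i, G i) := ⟨fun a b => DFinsupp.ext fun i => isEmptyElim i⟩
    have hz0 : z = 0 := by
      have h0 : (LinearMap.id : K →ₗ[ℤ] K) = 0 :=
        LinearMap.ext fun x => Subsingleton.elim _ _
      calc z = LinearMap.lTensor Q (LinearMap.id : K →ₗ[ℤ] K) z := by
              rw [LinearMap.lTensor_id]; rfl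
        _ = LinearMap.lTensor Q (0 : K →ₗ[ℤ] K) z := by rw [h0]
        _ = 0 := by rw [LinearMap.lTensor_zero]; rfl
    rw [hz0]; exact Submodule.zero_mem _
  | inr h =>
    obtain ⟨T, hT⟩ := TensorProduct.exists_finset z
    set S : Finset ι := T.sup (fun p => DFinsupp.support ((p.2 : K) : ⨁ i, G i)) with hS
    obtain ⟨j₀, hj₀⟩ := S.exists_le
    set g₀ : (⨁ i, G i) →ₗ[R] G j₀ :=
      DirectSum.toModule R ι (G j₀) (fun i => if h : i ≤ j₀ then f i j₀ h else 0) with hg₀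
    have hsupp : ∀ p ∈ T, ∀ i ∈ DFinsupp.support ((p.2 : K) : ⨁ i, G i), i ≤ j₀ := by
      intro p hp i hi
      exact hj₀ i (Finset.le_sup (f := fun p => DFinsupp.support ((p.2 : K) : ⨁ i, G i)) hp hi)
    -- of j₀ ∘ g₀ agrees with π on elements supported below j₀
    have hofg : ∀ k : ⨁ i, G i, (∀ i ∈ DFinsupp.support k, i ≤ j₀) →
        Module.DirectLimit.of R ι G f j₀ (g₀ k) = π k := by
      intro k hk
      refine eq_on_supported j₀ ((Module.DirectLimit.of R ι G f j₀).comp g₀) π ?_ k hk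
      intro i hi x
      simp only [LinearMap.comp_apply, hg₀, hπ, DirectSum.toModule_lof, dif_pos hi,
        Module.DirectLimit.of_f]
    -- choose one large index killing all the partial images
    have Hc : ∀ p : {p // p ∈ T}, ∃ jp, ∃ hle : j₀ ≤ jp,
        f j₀ jp hle (g₀ ((p.1.2 : K) : ⨁ i, G i)) = 0 := by
      intro p
      have h0 : Module.DirectLimit.of R ι G f j₀ (g₀ ((p.1.2 : K) : ⨁ i, G i)) = 0 := by
        rw [hofg _ (hsupp p.1 p.2)]
        exact (LinearMap.mem_ker).mp (p.1.2 : K).2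
      obtain ⟨jp, hle, hzero⟩ := Module.DirectLimit.of.zero_exact h0
      exact ⟨jp, hle, hzero⟩
    choose jp hple hpzero using Hc
    obtain ⟨j, hj⟩ := (insert j₀ (T.attach.image jp)).exists_le
    have hj₀j : j₀ ≤ j := hj j₀ (Finset.mem_insert_self _ _)
    have hjpj : ∀ p, jp p ≤ j := fun p =>
      hj _ (Finset.mem_insert_of_mem (Finset.mem_image_of_mem _ (Finset.mem_attach _ p)))
    have hzeroj : ∀ p : {p // p ∈ T}, f j₀ j hj₀j (g₀ ((p.1.2 : K) : ⨁ i, G i)) = 0 := by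
      intro p
      have hm := Module.DirectedSystem.map_map (f := f) (hple p) (hjpj p)
        (g₀ ((p.1.2 : K) : ⨁ i, G i))
      have h2 : f j₀ j (le_trans (hple p) (hjpj p)) (g₀ ((p.1.2 : K) : ⨁ i, G i)) = 0 := by
        rw [← hm, hpzero p, map_zero]
      exact h2
    -- the retraction
    set Φ : (⨁ i, G i) →ₗ[R] ⨁ i, G i :=
      DirectSum.toModule R ι (⨁ i, G i) (fun i =>
        if h : i ≤ j₀ then
          DirectSum.lof R ι G i - (DirectSum.lof R ι G j).comp (f i j (h.trans hj₀j))
        else 0) with hΦ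
    have hΦK : ∀ x, Φ x ∈ K := by
      have hcomp : π.comp Φ = 0 := by
        apply DirectSum.linearMap_ext
        intro i
        ext x
        simp only [LinearMap.comp_apply, LinearMap.zero_apply, hΦ, DirectSum.toModule_lof]
        by_cases h : i ≤ j₀
        · rw [dif_pos h]
          simp only [LinearMap.sub_apply, LinearMap.comp_apply, map_sub, hπ,
            DirectSum.toModule_lof, Module.DirectLimit.of_f, sub_self]
        · rw [dif_neg h]; simp
      intro x
      rw [hK, LinearMap.mem_ker, ← LinearMap.comp_apply, hcomp, LinearMap.zero_apply]
    set Φ' : (⨁ i, G i) →ₗ[R] K := Φ.codRestrict K hΦK with hΦ'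
    -- Φ fixes the elements appearing in z
    have hfix : ∀ p : {p // p ∈ T},
        Φ ((p.1.2 : K) : ⨁ i, G i) = ((p.1.2 : K) : ⨁ i, G i) := by
      intro p
      have hstep : Φ ((p.1.2 : K) : ⨁ i, G i) = ((p.1.2 : K) : ⨁ i, G i)
          - DirectSum.lof R ι G j (f j₀ j hj₀j (g₀ ((p.1.2 : K) : ⨁ i, G i))) := by
        have := eq_on_supported j₀ Φ
          (LinearMap.id - (DirectSum.lof R ι G j).comp ((f j₀ j hj₀j).comp g₀))
          (fun i hi x => by
            simp only [hΦ, hg₀, DirectSum.toModule_lof, dif_pos hi, LinearMap.sub_apply,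
              LinearMap.comp_apply, LinearMap.id_apply]
            rw [Module.DirectedSystem.map_map (f := f) hi hj₀j])
          ((p.1.2 : K) : ⨁ i, G i) (hsupp p.1 p.2)
        simpa using this
      rw [hstep, hzeroj p, map_zero, sub_zero]
    have hfix' : ∀ p ∈ T, (Φ'.comp K.subtype) p.2 = p.2 := by
      intro p hp
      exact Subtype.ext (hfix ⟨p, hp⟩)
    have hz2 : LinearMap.lTensor Q (Φ'.comp K.subtype).toAddMonoidHom.toIntLinearMap z = z := by
      conv_lhs => rw [hT]
      rw [map_sum]
      conv_rhs => rw [hT]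
      refine Finset.sum_congr rfl fun p hp => ?_
      rw [LinearMap.lTensor_tmul]
      show p.1 ⊗ₜ[ℤ] ((Φ'.comp K.subtype) p.2) = _
      rw [hfix' p hp]
    have hcompose : (Φ'.comp K.subtype).toAddMonoidHom.toIntLinearMap
        = (Φ'.toAddMonoidHom.toIntLinearMap).comp (K.subtype.toAddMonoidHom.toIntLinearMap) :=
      LinearMap.ext fun _ => rfl
    rw [← hz2, hcompose, LinearMap.lTensor_comp, LinearMap.comp_apply]
    exact tensorRelations_map_mem R Q Φ' hz

end
end

section
/- If 0 → X′ → X → X″ → 0 is a pure exact sequence of left R-modules, then the Pontryagin dual sequence 0 → (X″)^∨ → X^∨ → (X′)^∨ → 0 of right R-modules is split exact. -/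
/-
A character of `Q ⊗_R X` is the same as a right `R`-linear map `Q → X^∨`. Take `Q = (X')^∨`:
evaluation is a character of `(X')^∨ ⊗_R X'`, and purity makes `(X')^∨ ⊗_R X' → (X')^∨ ⊗_R X`
injective, so since `ℚ/ℤ` is an injective abelian group the evaluation extends to a character of
`(X')^∨ ⊗_R X`. The corresponding map `(X')^∨ → X^∨` is a section of the dual of `X' → X`. The
dual sequence is exact because `Hom(-, ℚ/ℤ)` is left exact, and a short exact sequence with a
section splits.
-/

universe u

open TensorProduct CategoryTheory DirectSum

noncomputable section

/-- The right `R`-module structure on the Pontryagin dual `Hom_ℤ(X, ℚ/ℤ)` of a left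
`R`-module `X`, given by `(φ • r) x = φ (r • x)`. -/
instance pdualModule (R : Type u) [Ring R] (X : Type u) [AddCommGroup X] [Module R X] :
    Module Rᵐᵒᵖ (X →+ AddCircle (1 : ℚ)) :=
  inferInstanceAs (Module Rᵈᵐᵃ (X →+ AddCircle (1 : ℚ)))

/-- The Pontryagin dual of an `R`-linear map of left `R`-modules, as a map of
right `R`-modules. -/
def pdualMap (R : Type u) [Ring R] {M N : Type u} [AddCommGroup M] [Module R M]
    [AddCommGroup N] [Module R N] (f : M →ₗ[R] N) :
    (N →+ AddCircle (1 : ℚ)) →ₗ[Rᵐᵒᵖ] (M →+ AddCircle (1 : ℚ)) where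
  toFun φ := φ.comp f.toAddMonoidHom
  map_add' φ ψ := by ext x; rfl
  map_smul' r φ := by ext x; exact (congrArg φ (f.map_smul r.unop x)).symm

local notation "ℚ/ℤ" => AddCircle (1 : ℚ)

section PontryaginDual

variable {R : Type u} [Ring R] {M N P : Type u} [AddCommGroup M] [Module R M]
  [AddCommGroup N] [Module R N] [AddCommGroup P] [Module R P]

@[simp]
lemma pdualModule_smul_apply (r : Rᵐᵒᵖ) (φ : M →+ ℚ/ℤ) (m : M) :
    (r • φ) m = φ (r.unop • m) :=
  rfl

lemma pdualMap_injective_of_surjective {g : N →ₗ[R] P} (hg : Function.Surjective g) :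
    Function.Injective (pdualMap R g) :=
  CharacterModule.dual_injective_of_surjective (R := ℤ) g.toAddMonoidHom.toIntLinearMap hg

lemma exact_pdualMap_of_exact_of_surjective {f : M →ₗ[R] N} {g : N →ₗ[R] P}
    (hfg : Function.Exact f g) (hg : Function.Surjective g) :
    Function.Exact (pdualMap R g) (pdualMap R f) := by
  intro φ
  constructor
  · intro hφ
    have hker : g.toAddMonoidHom.ker ≤ φ.ker := by
      intro x hx
      obtain ⟨m, rfl⟩ := (hfg x).1 hx
      exact DFunLike.congr_fun hφ m
    exact ⟨g.toAddMonoidHom.liftOfSurjective hg ⟨φ, hker⟩,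
      AddMonoidHom.liftOfRightInverse_comp _ _ _ _⟩
  · rintro ⟨ψ, rfl⟩
    ext m
    show ψ (g (f m)) = 0
    rw [hfg.apply_apply_eq_zero, map_zero]

end PontryaginDual

section BalancedTensor

variable (R : Type u) [Ring R] (Q : Type u) [AddCommGroup Q] [Module Rᵐᵒᵖ Q]
  {M N : Type u} [AddCommGroup M] [Module R M] [AddCommGroup N] [Module R N]

/-- The tensor product `Q ⊗_R M`. -/
abbrev TensorOver (M : Type u) [AddCommGroup M] [Module R M] : Type u :=
  TensorProduct ℤ Q M ⧸ tensorRelations R Q M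

variable {R Q}

lemma TensorOver.mk_smul_tmul (r : R) (q : Q) (m : M) :
    (Submodule.Quotient.mk ((MulOpposite.op r • q) ⊗ₜ[ℤ] m) : TensorOver R Q M) =
      Submodule.Quotient.mk (q ⊗ₜ[ℤ] (r • m)) :=
  (Submodule.Quotient.eq _).2 (Submodule.subset_span ⟨q, r, m, rfl⟩)

lemma tensorRelations_le_comap_lTensor (f : M →ₗ[R] N) :
    tensorRelations R Q M ≤
      (tensorRelations R Q N).comap (LinearMap.lTensor Q f.toAddMonoidHom.toIntLinearMap) := by
  refine Submodule.span_le.2 ?_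
  rintro _ ⟨q, r, m, rfl⟩
  refine Submodule.subset_span ⟨q, r, f m, ?_⟩
  simp

variable (Q) in
def TensorOver.map (f : M →ₗ[R] N) : TensorOver R Q M →ₗ[ℤ] TensorOver R Q N :=
  Submodule.mapQ _ _ _ (tensorRelations_le_comap_lTensor f)

lemma TensorOver.map_injective {f : M →ₗ[R] N} (hf : StaysInjective R Q f) :
    Function.Injective (TensorOver.map Q f) := by
  refine (injective_iff_map_eq_zero _).2 fun z hz => ?_
  induction z using Submodule.Quotient.induction_on with
  | H z =>
    exact (Submodule.Quotient.mk_eq_zero _).2 (hf z ((Submodule.Quotient.mk_eq_zero _).1 hz))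

end BalancedTensor

section Adjunction

variable {R : Type u} [Ring R] {Q : Type u} [AddCommGroup Q] [Module Rᵐᵒᵖ Q]
  {M N : Type u} [AddCommGroup M] [Module R M] [AddCommGroup N] [Module R N]

def homOfCharacter (χ : TensorOver R Q N →ₗ[ℤ] ℚ/ℤ) : Q →ₗ[Rᵐᵒᵖ] (N →+ ℚ/ℤ) where
  toFun q := AddMonoidHom.mk' (fun n => χ (Submodule.Quotient.mk (q ⊗ₜ[ℤ] n))) fun n n' => by
    rw [tmul_add, Submodule.Quotient.mk_add, map_add]
  map_add' q q' := by
    ext n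
    simp only [AddMonoidHom.mk'_apply, AddMonoidHom.add_apply, add_tmul,
      Submodule.Quotient.mk_add, map_add]
  map_smul' r q := by
    ext n
    simp only [AddMonoidHom.mk'_apply, pdualModule_smul_apply, RingHom.id_apply,
      ← TensorOver.mk_smul_tmul, MulOpposite.op_unop]

lemma pdualMap_comp_homOfCharacter (f : M →ₗ[R] N) (χ : TensorOver R Q N →ₗ[ℤ] ℚ/ℤ) :
    pdualMap R f ∘ₗ homOfCharacter χ = homOfCharacter (χ ∘ₗ TensorOver.map Q f) :=
  rfl

variable (R M) in
def evalCharacter : TensorOver R (M →+ ℚ/ℤ) M →ₗ[ℤ] ℚ/ℤ :=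
  Submodule.liftQ _ (TensorProduct.lift (addMonoidHomLequivInt ℤ).toLinearMap) <|
    Submodule.span_le.2 <| by
      rintro _ ⟨φ, r, m, rfl⟩
      show TensorProduct.lift (addMonoidHomLequivInt ℤ).toLinearMap (_ - _) = 0
      rw [map_sub, TensorProduct.lift.tmul, TensorProduct.lift.tmul]
      exact sub_self _

lemma homOfCharacter_evalCharacter : homOfCharacter (evalCharacter R M) = LinearMap.id :=
  rfl

end Adjunction

lemma exists_pdualMap_comp_eq_id {R : Type u} [Ring R] {M N : Type u} [AddCommGroup M]
    [Module R M] [AddCommGroup N] [Module R N] {f : M →ₗ[R] N}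
    (hf : StaysInjective R (M →+ ℚ/ℤ) f) :
    ∃ σ : (M →+ ℚ/ℤ) →ₗ[Rᵐᵒᵖ] (N →+ ℚ/ℤ), pdualMap R f ∘ₗ σ = LinearMap.id := by
  obtain ⟨χ, hχ⟩ := CharacterModule.dual_surjective_of_injective _ (TensorOver.map_injective hf)
    (evalCharacter R M).toAddMonoidHom
  refine ⟨homOfCharacter χ.toIntLinearMap, ?_⟩
  rw [pdualMap_comp_homOfCharacter, ← homOfCharacter_evalCharacter]
  congr 1
  exact LinearMap.ext fun z => DFunLike.congr_fun hχ z

/-- If `0 → X' → X → X'' → 0` is a pure exact sequence of left `R`-modules, then the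
Pontryagin dual sequence `0 → (X'')^∨ → X^∨ → (X')^∨ → 0` of right `R`-modules is split
exact. -/
theorem stmt8 (R : Type u) [Ring R] (X' X X'' : Type u)
    [AddCommGroup X'] [Module R X'] [AddCommGroup X] [Module R X]
    [AddCommGroup X''] [Module R X'']
    (f : X' →ₗ[R] X) (g : X →ₗ[R] X'') (hpure : IsPureExactSeq R f g) :
    Function.Injective (pdualMap R g) ∧
    Function.Exact (pdualMap R g) (pdualMap R f) ∧
    Function.Surjective (pdualMap R f) ∧
    (∃ σ : (X' →+ AddCircle (1 : ℚ)) →ₗ[Rᵐᵒᵖ] (X →+ AddCircle (1 : ℚ)),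
      pdualMap R f ∘ₗ σ = LinearMap.id) ∧
    (∃ ρ : (X →+ AddCircle (1 : ℚ)) →ₗ[Rᵐᵒᵖ] (X'' →+ AddCircle (1 : ℚ)),
      ρ ∘ₗ pdualMap R g = LinearMap.id) := by
  obtain ⟨hg, hfg, -, hf⟩ := hpure
  obtain ⟨σ, hσ⟩ := exists_pdualMap_comp_eq_id (hf _)
  have hinj := pdualMap_injective_of_surjective hg
  have hexact := exact_pdualMap_of_exact_of_surjective hfg hg
  have hsurj := LinearMap.surjective_of_comp_eq_id σ _ hσ
  have hsplit := (hexact.split_tfae hinj hsurj).out 0 1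
  exact ⟨hinj, hexact, hsurj, ⟨σ, hσ⟩, hsplit.mp ⟨σ, hσ⟩⟩

end
end

section
/- Let A be a left R-module with a projective resolution by finitely generated modules, and 0 → Y′ → Y → Y″ → 0 a pure exact sequence of left R-modules with Ext¹_R(A, Y) = 0. Then Ext¹_R(A, Y″) = 0, i.e., A^⊥ is closed under pure quotients over a left-coherent ring. -/
universe u

open TensorProduct CategoryTheory DirectSum

noncomputable section

/-- `Ext¹_R(M, N) = 0`, phrased via the `Ext` bifunctor on the category of
left `R`-modules. -/
def Ext1Zero (R : Type u) [Ring R] (M N : Type u) [AddCommGroup M] [Module R M]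
    [AddCommGroup N] [Module R N] : Prop :=
  Subsingleton (((Ext ℤ (ModuleCat.{u} R) 1).obj (Opposite.op (ModuleCat.of R M))).obj
    (ModuleCat.of R N))


/-!
A class in `Ext¹(A, Y'')`, computed from `P`, is a map `φ : P₁ → Y''` vanishing on the image of
`d : P₂ → P₁`. Lift it to `ψ : P₁ → Y`; then `ψ ∘ d` takes values in `Y'`. Since `P₂` is finitely
generated and `P₁` is a retract of some `Rⁿ`, extending `ψ ∘ d` over `P₁` with values in `Y'`
amounts to solving in `Y'` a finite linear system that is solvable in `Y`. Purity provides such a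
solution: tensoring with the right module `Q` presented by the matrix of the system turns
solvability into the vanishing of an element of `Q ⊗_R Y' ≅ Y'ᵐ / r Y'ⁿ`. Correcting `ψ` by the
extension gives a cocycle into `Y`, which is a coboundary as `Ext¹(A, Y) = 0`, and composing
with `Y → Y''` shows that `φ` is a coboundary.
-/

section TensorRelations

variable {R : Type u} [Ring R] {Q M : Type u} [AddCommGroup Q] [Module Rᵐᵒᵖ Q]
  [AddCommGroup M] [Module R M]

theorem tmul_smul_sub_mem_tensorRelations (q : Q) (r : R) (x : M) :
    q ⊗ₜ[ℤ] (r • x) - (MulOpposite.op r • q) ⊗ₜ[ℤ] x ∈ tensorRelations R Q M := by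
  rw [← neg_sub]
  exact neg_mem (Submodule.subset_span ⟨q, r, x, rfl⟩)

theorem lift_eq_zero_of_mem_tensorRelations {T : Type*} [AddCommGroup T]
    (b : Q →ₗ[ℤ] M →ₗ[ℤ] T) (hb : ∀ q (r : R) x, b (MulOpposite.op r • q) x = b q (r • x))
    {z : Q ⊗[ℤ] M} (hz : z ∈ tensorRelations R Q M) : TensorProduct.lift b z = 0 := by
  induction hz using Submodule.span_induction with
  | mem z hz => obtain ⟨q, r, x, rfl⟩ := hz; simp [hb]
  | zero => simp
  | add z z' _ _ h h' => simp [h, h']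
  | smul k z _ h => simp [h]

end TensorRelations

section LinearSystem

variable {R : Type u} [Ring R] {m n : ℕ} (r : Fin m → Fin n → R)

def smulMulVec (M : Type*) [AddCommGroup M] [Module R M] : (Fin n → M) →ₗ[ℤ] (Fin m → M) :=
  LinearMap.pi fun j => ∑ i, DistribSMul.toLinearMap ℤ M (r j i) ∘ₗ LinearMap.proj i

@[simp]
theorem smulMulVec_apply {M : Type*} [AddCommGroup M] [Module R M] (w : Fin n → M) (j : Fin m) :
    smulMulVec r M w j = ∑ i, r j i • w i := by
  simp [smulMulVec, DistribSMul.toLinearMap]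

abbrev columnSpan : Submodule Rᵐᵒᵖ (Fin m → R) :=
  Submodule.span Rᵐᵒᵖ (Set.range fun i j => r j i)

/-- The right module with generators `e₁, …, eₘ` and relations `∑ⱼ eⱼ * r j i = 0`. -/
abbrev PresentedRightModule : Type u :=
  (Fin m → R) ⧸ columnSpan r

namespace PresentedRightModule

def gen (j : Fin m) : PresentedRightModule r := Submodule.Quotient.mk (Pi.single j 1)

theorem sum_op_smul_gen (i : Fin n) : ∑ j, MulOpposite.op (r j i) • gen r j = 0 := by
  have hcol : ∑ j, MulOpposite.op (r j i) • (Pi.single j 1 : Fin m → R) = fun j => r j i := by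
    ext j
    simp [Pi.single_apply, MulOpposite.smul_eq_mul_unop]
  have hmk := congrArg (columnSpan r).mkQ hcol
  simp only [map_sum, map_smul] at hmk
  simp only [gen, ← Submodule.mkQ_apply, hmk]
  exact (Submodule.Quotient.mk_eq_zero _).2 (Submodule.subset_span ⟨i, rfl⟩)

theorem sum_gen_tmul_smulMulVec_mem {M : Type u} [AddCommGroup M] [Module R M] (y : Fin n → M) :
    ∑ j, gen r j ⊗ₜ[ℤ] smulMulVec r M y j ∈ tensorRelations R (PresentedRightModule r) M := by
  have : ∑ j, gen r j ⊗ₜ[ℤ] smulMulVec r M y j =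
      ∑ j, ∑ i, (gen r j ⊗ₜ[ℤ] (r j i • y i) - (MulOpposite.op (r j i) • gen r j) ⊗ₜ[ℤ] y i) := by
    simp only [Finset.sum_sub_distrib, smulMulVec_apply, tmul_sum]
    rw [Finset.sum_comm (f := fun j i => (MulOpposite.op (r j i) • gen r j) ⊗ₜ[ℤ] y i)]
    simp [← sum_tmul, sum_op_smul_gen]
  rw [this]
  exact Submodule.sum_mem _ fun j _ => Submodule.sum_mem _ fun i _ =>
    tmul_smul_sub_mem_tensorRelations _ _ _

variable (M : Type u) [AddCommGroup M] [Module R M]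

def freePairing : (Fin m → R) →ₗ[ℤ] M →ₗ[ℤ] (Fin m → M) ⧸ LinearMap.range (smulMulVec r M) :=
  (LinearMap.mk₂ ℤ (fun a x j => a j • x) (fun _ _ _ => by ext; simp [add_smul])
    (fun _ _ _ => by ext; simp [mul_smul, Int.cast_smul_eq_zsmul])
    (fun _ _ _ => by ext; simp [smul_add]) (fun _ _ _ => by ext; exact smul_comm _ _ _)).compr₂
    (Submodule.mkQ _)

variable {M}

theorem freePairing_apply (a : Fin m → R) (x : M) :
    freePairing r M a x = Submodule.Quotient.mk fun j => a j • x :=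
  rfl

theorem freePairing_op_smul (a : Fin m → R) (s : R) (x : M) :
    freePairing r M (MulOpposite.op s • a) x = freePairing r M a (s • x) := by
  simp [freePairing_apply, MulOpposite.smul_eq_mul_unop, mul_smul]

theorem restrictScalars_le_ker_freePairing :
    (columnSpan r).restrictScalars ℤ ≤ LinearMap.ker (freePairing r M) := by
  intro a ha
  induction ha using Submodule.span_induction with
  | mem a ha =>
    obtain ⟨i, rfl⟩ := ha
    ext x
    refine (Submodule.Quotient.mk_eq_zero _).2 ⟨Pi.single i x, funext fun j => ?_⟩
    simp [Pi.single_apply]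
  | zero => simp
  | add a b _ _ ha hb => simp_all
  | smul s a _ ha =>
    ext x
    rw [LinearMap.mem_ker] at ha
    rw [← MulOpposite.op_unop s, freePairing_op_smul, ha]
    rfl

variable (M) in
def pairing : PresentedRightModule r →ₗ[ℤ] M →ₗ[ℤ] (Fin m → M) ⧸ LinearMap.range (smulMulVec r M) :=
  Submodule.liftQ _ (freePairing r M) (restrictScalars_le_ker_freePairing r) ∘ₗ
    (Submodule.Quotient.restrictScalarsEquiv ℤ _).symm.toLinearMap

theorem pairing_mk (a : Fin m → R) :
    pairing r M (Submodule.Quotient.mk a) = freePairing r M a := by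
  simp [pairing, Submodule.Quotient.restrictScalarsEquiv_symm_mk]

theorem pairing_op_smul (q : PresentedRightModule r) (s : R) (x : M) :
    pairing r M (MulOpposite.op s • q) x = pairing r M q (s • x) := by
  obtain ⟨a, rfl⟩ := Submodule.Quotient.mk_surjective _ q
  rw [← Submodule.Quotient.mk_smul, pairing_mk, pairing_mk, freePairing_op_smul]

theorem lift_pairing_sum_gen_tmul (z : Fin m → M) :
    TensorProduct.lift (pairing r M) (∑ j, gen r j ⊗ₜ[ℤ] z j) = Submodule.Quotient.mk z := by
  have hz : ∑ j, (fun j' => (Pi.single j 1 : Fin m → R) j' • z j) = z := by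
    ext
    simp [Pi.single_apply]
  simp only [map_sum, TensorProduct.lift.tmul, gen, pairing_mk, freePairing_apply]
  conv_rhs => rw [← hz]
  exact (map_sum (Submodule.mkQ _) _ _).symm

end PresentedRightModule

end LinearSystem

theorem ext1Zero_iff_of_projectiveResolution {R : Type u} [Ring R] {A : Type u} [AddCommGroup A]
    [Module R A] (P : ProjectiveResolution (ModuleCat.of R A)) (N : Type u) [AddCommGroup N]
    [Module R N] :
    Ext1Zero R A N ↔ ∀ φ : P.complex.X 1 →ₗ[R] N, φ ∘ₗ (P.complex.d 2 1).hom = 0 →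
      ∃ χ : P.complex.X 0 →ₗ[R] N, χ ∘ₗ (P.complex.d 1 0).hom = φ := by
  rw [Ext1Zero, ← ModuleCat.isZero_iff_subsingleton, (P.isoExt 1 _).isZero_iff,
    ← HomologicalComplex.exactAt_iff_isZero_homology,
    HomologicalComplex.exactAt_iff' _ 0 1 2 (by simp) (by simp),
    ShortComplex.moduleCat_exact_iff]
  constructor
  · intro h φ hφ
    obtain ⟨χ, hχ⟩ := h (ModuleCat.ofHom φ) (ModuleCat.hom_ext hφ)
    exact ⟨χ.hom, congrArg ModuleCat.Hom.hom hχ⟩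
  · intro h φ hφ
    obtain ⟨χ, hχ⟩ := h φ.hom (congrArg ModuleCat.Hom.hom hφ)
    exact ⟨ModuleCat.ofHom χ, ModuleCat.hom_ext hχ⟩

section Purity

variable {R : Type u} [Ring R] {Y' Y : Type u} [AddCommGroup Y'] [Module R Y']
  [AddCommGroup Y] [Module R Y] {f : Y' →ₗ[R] Y}

open PresentedRightModule in
theorem IsPureMono.mem_range_smulMulVec (hf : IsPureMono R f) {m n : ℕ}
    (r : Fin m → Fin n → R) {z : Fin m → Y'} (hz : f ∘ z ∈ LinearMap.range (smulMulVec r Y)) :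
    z ∈ LinearMap.range (smulMulVec r Y') := by
  obtain ⟨y, hy⟩ := hz
  have hmem : ∑ j, gen r j ⊗ₜ[ℤ] z j ∈ tensorRelations R (PresentedRightModule r) Y' := by
    refine hf.2 _ _ ?_
    rw [map_sum]
    convert sum_gen_tmul_smulMulVec_mem r y using 2 with j
    rw [hy, LinearMap.lTensor_tmul]
    rfl
  rw [← Submodule.Quotient.mk_eq_zero, ← lift_pairing_sum_gen_tmul]
  exact lift_eq_zero_of_mem_tensorRelations _ (pairing_op_smul r) hmem

theorem IsPureMono.exists_comp_comp_eq_of_free (hf : IsPureMono R f) {N : Type*} [AddCommGroup N]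
    [Module R N] [Module.Finite R N] {n : ℕ} (d : N →ₗ[R] Fin n → R) (ψ : (Fin n → R) →ₗ[R] Y)
    (hψ : LinearMap.range (ψ ∘ₗ d) ≤ LinearMap.range f) :
    ∃ h : (Fin n → R) →ₗ[R] Y', f ∘ₗ h ∘ₗ d = ψ ∘ₗ d := by
  obtain ⟨m, p, hp⟩ := Module.Finite.exists_fin (R := R) (M := N)
  choose z hz using fun j => hψ ⟨p j, rfl⟩
  have hfz : f ∘ z ∈ LinearMap.range (smulMulVec (fun j => d (p j)) Y) := by
    refine ⟨fun i => ψ (Pi.single i 1), funext fun j => ?_⟩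
    simp_rw [Function.comp_apply, hz, LinearMap.comp_apply, smulMulVec_apply, ← map_smul, ← map_sum]
    congr 1
    ext
    simp [Pi.single_apply]
  obtain ⟨w, hw⟩ := hf.mem_range_smulMulVec _ hfz
  refine ⟨Fintype.linearCombination R w, LinearMap.ext_on_range hp fun j => ?_⟩
  simp [Fintype.linearCombination_apply, ← hz, ← congrFun hw j]

theorem IsPureMono.exists_comp_comp_eq (hf : IsPureMono R f) {P N : Type*} [AddCommGroup P]
    [Module R P] [Module.Finite R P] [Module.Projective R P] [AddCommGroup N] [Module R N]
    [Module.Finite R N] (d : N →ₗ[R] P) (ψ : P →ₗ[R] Y)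
    (hψ : LinearMap.range (ψ ∘ₗ d) ≤ LinearMap.range f) :
    ∃ h : P →ₗ[R] Y', f ∘ₗ h ∘ₗ d = ψ ∘ₗ d := by
  obtain ⟨n, π, hπ⟩ := Module.Finite.exists_fin' R P
  obtain ⟨s, hs⟩ := Module.projective_lifting_property π LinearMap.id hπ
  have hd : ψ ∘ₗ d = (ψ ∘ₗ π) ∘ₗ (s ∘ₗ d) := by
    ext x
    simp [← LinearMap.comp_apply π s, hs]
  obtain ⟨h, hh⟩ := hf.exists_comp_comp_eq_of_free (s ∘ₗ d) (ψ ∘ₗ π) (hd ▸ hψ)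
  exact ⟨h ∘ₗ s, hd ▸ hh⟩

end Purity

/-- If the left `R`-module `A` admits a projective resolution consisting of finitely
generated modules, and `0 → Y' → Y → Y'' → 0` is a pure exact sequence with
`Ext¹(A, Y) = 0`, then `Ext¹(A, Y'') = 0`: the class `A^⊥` is closed under pure
quotients. -/
theorem stmt14 (R : Type u) [Ring R] (A : Type u) [AddCommGroup A] [Module R A]
    (P : ProjectiveResolution (ModuleCat.of R A))
    (hfin : ∀ n : ℕ, Module.Finite R (P.complex.X n))
    (Y' Y Y'' : Type u) [AddCommGroup Y'] [Module R Y'] [AddCommGroup Y] [Module R Y]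
    [AddCommGroup Y''] [Module R Y'']
    (f : Y' →ₗ[R] Y) (g : Y →ₗ[R] Y'') (hpure : IsPureExactSeq R f g)
    (hY : Ext1Zero R A Y) :
    Ext1Zero R A Y'' := by
  obtain ⟨hg, hfg, hf⟩ := hpure
  rw [ext1Zero_iff_of_projectiveResolution P] at hY ⊢
  intro φ hφ
  have := hfin 1
  have := hfin 2
  have := P.projective 1
  obtain ⟨ψ, hψ⟩ := Module.projective_lifting_property g φ hg
  have hrange : LinearMap.range (ψ ∘ₗ (P.complex.d 2 1).hom) ≤ LinearMap.range f := by
    rintro _ ⟨x, rfl⟩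
    rw [← hfg.linearMap_ker_eq, LinearMap.mem_ker, ← LinearMap.comp_apply g, ← LinearMap.comp_assoc,
      hψ, hφ, LinearMap.zero_apply]
  obtain ⟨h, hh⟩ := hf.exists_comp_comp_eq _ ψ hrange
  obtain ⟨χ, hχ⟩ := hY (ψ - f ∘ₗ h) <| by
    rw [LinearMap.sub_comp, ← hh, LinearMap.comp_assoc, sub_self]
  refine ⟨g ∘ₗ χ, ?_⟩
  rw [LinearMap.comp_assoc, hχ, LinearMap.comp_sub, hψ, ← LinearMap.comp_assoc,
    hfg.linearMap_comp_eq_zero, LinearMap.zero_comp, sub_zero]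

end
end
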